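/- Let ε ∈ (0,1) and α > 0, and define h(k₂) = k₂²/(k₂²+α²) + (α²/(k₂²+α²))·1{k₂ ≤ 2ε/(1−ε)}·((1+ε)/(1+k₂) − (1−ε))/(2ε) for k₂ > 0. Then for every square-integrable real random variable Y with mean 1 and standard deviation at most α, and R uniform on [1−ε, 1+ε] independent of Y, one has P(YR ≤ 1+ε) ≥ inf_{k₂ > 0} h(k₂). -/

import Mathlib

open MeasureTheory ProbabilityTheory Real

/-- The uniform probability measure on the interval `[a, b]`. -/
noncomputable def uniformIcc (a b : ℝ) : Measure ℝ :=
  (ENNReal.ofReal (b - a))⁻¹ • (MeasureTheory.volume.restrict (Set.Icc a b))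

/-- The median of `2*n+1` real values: their `(n+1)`-st smallest value. -/
noncomputable def medianOf {n : ℕ} (v : Fin (2 * n + 1) → ℝ) : ℝ :=
  (Multiset.sort (↑(List.ofFn v)) (· ≤ ·)).get ⟨n, by simp; omega⟩

/-- The nuisance factor `f(ε) = (1+ε)/((1-ε)² (1+ε-ε²))`. -/
noncomputable def nuisance (ε : ℝ) : ℝ := (1 + ε) / ((1 - ε) ^ 2 * (1 + ε - ε ^ 2))

/-- The function `h(k₂) = k₂²/(k₂²+α²) + (α²/(k₂²+α²))·1{k₂ ≤ 2ε/(1−ε)}·((1+ε)/(1+k₂) − (1−ε))/(2ε)`. -/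
noncomputable def hFun (ε α k₂ : ℝ) : ℝ :=
  k₂ ^ 2 / (k₂ ^ 2 + α ^ 2) +
    α ^ 2 / (k₂ ^ 2 + α ^ 2) *
      (if k₂ ≤ 2 * ε / (1 - ε) then ((1 + ε) / (1 + k₂) - (1 - ε)) / (2 * ε) else 0)

/-!
Let `G(y) = P(y R ≤ 1 + ε)`. By independence `P(Y R ≤ 1 + ε) = E[G(Y)]`; moreover `G = 1` on
`(-∞, 1]` and `G` is convex on `[1, ∞)`. Put `A = {Y > 1}`, `p = P(A)` and `1 + κ = E[Y | A]`.
Jensen's inequality on `A` gives `E[G(Y)] ≥ (1 - p) + p G(1 + κ)`. Since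
`E[(Y - 1) 1_A] = p κ = -E[(Y - 1) 1_Aᶜ]`, Cauchy–Schwarz on `A` and on `Aᶜ` gives
`p κ² ≤ (1 - p) Var Y`, i.e. `p ≤ α² / (κ² + α²)`, and these two bounds combine to `E[G(Y)] ≥ h(κ)`.
-/

open Set

/-- `P(y R ≤ 1 + ε)` for `R` uniform on `[1 - ε, 1 + ε]`, when `0 < ε ≤ 1`. -/
noncomputable def probMulLe (ε y : ℝ) : ℝ :=
  if y ≤ 1 then 1 else max 0 (((1 + ε) / y - (1 - ε)) / (2 * ε))

section probMulLe

variable {ε : ℝ}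

lemma measurable_probMulLe (ε : ℝ) : Measurable (probMulLe ε) :=
  Measurable.ite measurableSet_Iic measurable_const (by fun_prop)

lemma probMulLe_of_le_one {y : ℝ} (hy : y ≤ 1) : probMulLe ε y = 1 := if_pos hy

lemma probMulLe_of_one_lt {y : ℝ} (hy : 1 < y) :
    probMulLe ε y = max 0 (((1 + ε) / y - (1 - ε)) / (2 * ε)) :=
  if_neg hy.not_ge

lemma probMulLe_nonneg (ε y : ℝ) : 0 ≤ probMulLe ε y := by
  unfold probMulLe
  split_ifs
  exacts [zero_le_one, le_max_left _ _]

lemma probMulLe_le_one (hε : 0 < ε) (y : ℝ) : probMulLe ε y ≤ 1 := by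
  unfold probMulLe
  split_ifs with hy
  · rfl
  · refine max_le zero_le_one ?_
    rw [div_le_one (by positivity), sub_le_iff_le_add]
    calc (1 + ε) / y ≤ 1 + ε := div_le_self (by linarith) (by linarith)
      _ = 2 * ε + (1 - ε) := by ring

lemma integrable_probMulLe_comp {Ω : Type*} [MeasurableSpace Ω] {μ : Measure Ω}
    [IsFiniteMeasure μ] (hε : 0 < ε) {Y : Ω → ℝ} (hY : AEMeasurable Y μ) :
    Integrable (fun ω => probMulLe ε (Y ω)) μ :=
  .of_bound ((measurable_probMulLe ε).comp_aemeasurable hY).aestronglyMeasurable 1 <|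
    ae_of_all _ fun ω => by
      rw [Real.norm_of_nonneg (probMulLe_nonneg ε _)]
      exact probMulLe_le_one hε _

lemma probMulLe_eqOn_Ici (hε : ε ≠ 0) :
    EqOn (probMulLe ε) (fun y => max 0 (((1 + ε) / y - (1 - ε)) / (2 * ε))) (Ici 1) := by
  intro y (hy : 1 ≤ y)
  rcases hy.eq_or_lt with rfl | hy
  · have h₁ : ((1 + ε) / 1 - (1 - ε)) / (2 * ε) = 1 :=
      (div_eq_one_iff_eq (mul_ne_zero two_ne_zero hε)).2 (by ring)
    beta_reduce
    rw [probMulLe_of_le_one le_rfl, h₁, max_eq_right zero_le_one]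
  · exact probMulLe_of_one_lt hy

lemma convexOn_probMulLe (hε : 0 < ε) : ConvexOn ℝ (Ici 1) (probMulLe ε) := by
  have hinv : ConvexOn ℝ (Ici 1) fun y : ℝ => y⁻¹ := by
    refine ((convexOn_zpow (-1)).subset (fun y (hy : 1 ≤ y) => ?_) (convex_Ici 1)).congr ?_
    · exact lt_of_lt_of_le one_pos hy
    · intro y _
      simp
  refine ((convexOn_const 0 (convex_Ici 1)).sup
    ((hinv.smul (c := (1 + ε) / (2 * ε)) (by positivity)).add_const (-(1 - ε) / (2 * ε)))).congr
    fun y hy => ?_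
  rw [probMulLe_eqOn_Ici hε.ne' hy]
  simp only [Pi.sup_apply, Pi.add_apply, smul_eq_mul]
  congr 1
  field_simp
  ring

lemma continuousOn_probMulLe (hε : 0 < ε) : ContinuousOn (probMulLe ε) (Ici 1) := by
  refine ContinuousOn.congr ?_ (probMulLe_eqOn_Ici hε.ne')
  refine continuousOn_const.sup (((continuousOn_const.div continuousOn_id fun y hy => ?_).sub
    continuousOn_const).div_const _)
  exact (lt_of_lt_of_le one_pos hy).ne'

end probMulLe

lemma uniformIcc_Icc {a b c : ℝ} (hab : a < b) (hcb : c ≤ b) :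
    uniformIcc a b (Icc a c) = ENNReal.ofReal ((c - a) / (b - a)) := by
  rw [uniformIcc, Measure.smul_apply, Measure.restrict_apply measurableSet_Icc,
    inter_eq_left.2 (Icc_subset_Icc le_rfl hcb), Real.volume_Icc,
    ENNReal.ofReal_div_of_pos (sub_pos.2 hab), smul_eq_mul, ENNReal.div_eq_inv_mul]

lemma ofReal_probMulLe_le {ε : ℝ} (hε₀ : 0 < ε) (hε₁ : ε ≤ 1) (y : ℝ) :
    ENNReal.ofReal (probMulLe ε y) ≤ uniformIcc (1 - ε) (1 + ε) {r | y * r ≤ 1 + ε} := by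
  have hab : 1 - ε < 1 + ε := by linarith
  by_cases hy : y ≤ 1
  · calc ENNReal.ofReal (probMulLe ε y)
          = uniformIcc (1 - ε) (1 + ε) (Icc (1 - ε) (1 + ε)) := by
          rw [uniformIcc_Icc hab le_rfl, div_self (sub_pos.2 hab).ne', probMulLe_of_le_one hy]
      _ ≤ _ := measure_mono fun r ⟨hr₁, hr₂⟩ => by
          change y * r ≤ 1 + ε
          nlinarith
  · push Not at hy
    have hc : (1 + ε) / y ≤ 1 + ε := div_le_self (by linarith) hy.le
    calc ENNReal.ofReal (probMulLe ε y)
          = uniformIcc (1 - ε) (1 + ε) (Icc (1 - ε) ((1 + ε) / y)) := by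
          rw [uniformIcc_Icc hab hc, probMulLe_of_one_lt hy, ENNReal.ofReal_max,
            ENNReal.ofReal_zero, max_eq_right zero_le]
          ring_nf
      _ ≤ _ := measure_mono fun r hr => (le_div_iff₀' (by linarith)).1 hr.2

lemma ProbabilityTheory.IndepFun.measure_preimage_eq_lintegral {Ω α β : Type*}
    [MeasurableSpace Ω] [MeasurableSpace α] [MeasurableSpace β] {μ : Measure Ω} [IsFiniteMeasure μ]
    {X : Ω → α} {Y : Ω → β} (hXY : IndepFun X Y μ) (hX : Measurable X) (hY : Measurable Y)
    {S : Set (α × β)} (hS : MeasurableSet S) :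
    μ ((fun ω => (X ω, Y ω)) ⁻¹' S) = ∫⁻ x, μ.map Y (Prod.mk x ⁻¹' S) ∂μ.map X := by
  rw [← Measure.map_apply (hX.prodMk hY) hS,
    (indepFun_iff_map_prod_eq_prod_map_map hX.aemeasurable hY.aemeasurable).1 hXY,
    Measure.prod_apply hS]

lemma integral_probMulLe_le_measure_mul_le {Ω : Type*} [MeasureSpace Ω]
    [IsProbabilityMeasure (ℙ : Measure Ω)] {ε : ℝ} (hε₀ : 0 < ε) (hε₁ : ε ≤ 1)
    {Y R : Ω → ℝ} (hY : Measurable Y) (hR : Measurable R)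
    (hRlaw : Measure.map R ℙ = uniformIcc (1 - ε) (1 + ε)) (hindep : IndepFun Y R ℙ) :
    ∫ ω, probMulLe ε (Y ω) ≤ (ℙ {ω | Y ω * R ω ≤ 1 + ε}).toReal := by
  refine (ENNReal.ofReal_le_iff_le_toReal (measure_ne_top _ _)).1 ?_
  have hS : MeasurableSet {p : ℝ × ℝ | p.1 * p.2 ≤ 1 + ε} :=
    measurableSet_le (by fun_prop) measurable_const
  calc ENNReal.ofReal (∫ ω, probMulLe ε (Y ω))
      = ∫⁻ ω, ENNReal.ofReal (probMulLe ε (Y ω)) :=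
        ofReal_integral_eq_lintegral_ofReal (integrable_probMulLe_comp hε₀ hY.aemeasurable)
          (ae_of_all _ fun _ => probMulLe_nonneg _ _)
    _ = ∫⁻ y, ENNReal.ofReal (probMulLe ε y) ∂Measure.map Y ℙ :=
        (lintegral_map (measurable_probMulLe ε).ennreal_ofReal hY).symm
    _ ≤ ∫⁻ y, Measure.map R ℙ {r | y * r ≤ 1 + ε} ∂Measure.map Y ℙ :=
        lintegral_mono fun y => hRlaw ▸ ofReal_probMulLe_le hε₀ hε₁ y
    _ = ℙ {ω | Y ω * R ω ≤ 1 + ε} := (hindep.measure_preimage_eq_lintegral hY hR hS).symm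

section secondMoment

variable {Ω : Type*} [MeasurableSpace Ω] {μ : Measure Ω} {f : Ω → ℝ}

lemma sq_setIntegral_le_measureReal_mul [IsFiniteMeasure μ] (hf : MemLp f 2 μ) (s : Set Ω) :
    (∫ x in s, f x ∂μ) ^ 2 ≤ μ.real s * ∫ x in s, f x ^ 2 ∂μ := by
  by_cases hs : μ s = 0
  · simp [Measure.restrict_eq_zero.2 hs]
  have hp : 0 < μ.real s := ENNReal.toReal_pos hs (measure_ne_top _ _)
  have hJ := even_two.convexOn_pow.map_set_average_le (continuousOn_pow 2) isClosed_univ hs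
    (measure_ne_top _ _) (ae_of_all _ fun x => mem_univ (f x))
    (hf.integrable one_le_two).integrableOn hf.integrable_sq.integrableOn
  simp only [setAverage_eq, smul_eq_mul] at hJ
  rw [mul_pow, inv_pow, ← div_eq_inv_mul, ← div_eq_inv_mul,
    div_le_div_iff₀ (by positivity) hp] at hJ
  exact le_of_mul_le_mul_right (hJ.trans_eq (by ring)) hp

variable [IsProbabilityMeasure μ] {X : Ω → ℝ} {s : Set Ω}

lemma sq_setIntegral_sub_integral_le (hX : MemLp X 2 μ) (hs : MeasurableSet s) :
    (∫ x in s, (X x - μ[X]) ∂μ) ^ 2 ≤ μ.real s * (1 - μ.real s) * variance X μ := by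
  set f := fun x => X x - μ[X]
  have hf : MemLp f 2 μ := hX.sub (memLp_const _)
  have hf₀ : ∫ x, f x ∂μ = 0 := by
    simp [f, integral_sub (hX.integrable one_le_two) (integrable_const _)]
  have hcompl : ∫ x in sᶜ, f x ∂μ = -∫ x in s, f x ∂μ := by
    linarith [integral_add_compl hs (hf.integrable one_le_two)]
  have hvar : variance X μ = ∫ x in s, f x ^ 2 ∂μ + ∫ x in sᶜ, f x ^ 2 ∂μ := by
    rw [variance_eq_integral hX.aemeasurable, integral_add_compl hs hf.integrable_sq]
  have h₁ := sq_setIntegral_le_measureReal_mul hf s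
  have h₂ := sq_setIntegral_le_measureReal_mul hf sᶜ
  rw [hcompl, neg_sq, probReal_compl_eq_one_sub hs] at h₂
  have hp₀ : 0 ≤ μ.real s := measureReal_nonneg
  have hp₁ : μ.real s ≤ 1 := measureReal_le_one
  rw [hvar]
  nlinarith [mul_le_mul_of_nonneg_left h₁ (sub_nonneg.2 hp₁), mul_le_mul_of_nonneg_left h₂ hp₀]

lemma measureReal_mul_sq_setAverage_sub_le (hX : MemLp X 2 μ) (hs : MeasurableSet s) :
    μ.real s * (⨍ x in s, X x ∂μ - μ[X]) ^ 2 ≤ (1 - μ.real s) * variance X μ := by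
  rcases measureReal_nonneg.eq_or_lt with hp | hp
  · rw [← hp, zero_mul, sub_zero, one_mul]
    exact variance_nonneg X μ
  have hI : ∫ x in s, (X x - μ[X]) ∂μ = μ.real s * (⨍ x in s, X x ∂μ - μ[X]) := by
    rw [integral_sub (hX.integrable one_le_two).integrableOn (integrable_const _),
      setIntegral_const, setAverage_eq, smul_eq_mul, smul_eq_mul, mul_sub, mul_inv_cancel_left₀ hp.ne']
  refine le_of_mul_le_mul_left ?_ hp
  calc μ.real s * (μ.real s * (⨍ x in s, X x ∂μ - μ[X]) ^ 2)
      = (∫ x in s, (X x - μ[X]) ∂μ) ^ 2 := by rw [hI]; ring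
    _ ≤ μ.real s * (1 - μ.real s) * variance X μ := sq_setIntegral_sub_integral_le hX hs
    _ = μ.real s * ((1 - μ.real s) * variance X μ) := mul_assoc _ _ _

end secondMoment

section hFun

variable {ε α κ : ℝ}

lemma hFun_nonneg (hε : ε ∈ Ioo 0 1) (hκ : 0 ≤ κ) : 0 ≤ hFun ε α κ := by
  obtain ⟨hε₀, hε₁⟩ := hε
  have hind : 0 ≤ if κ ≤ 2 * ε / (1 - ε) then ((1 + ε) / (1 + κ) - (1 - ε)) / (2 * ε) else 0 := by
    split_ifs with h
    · rw [le_div_iff₀ (by linarith)] at h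
      refine div_nonneg (sub_nonneg.2 ?_) (by linarith)
      rw [le_div_iff₀ (by linarith)]
      linarith
    · exact le_rfl
  unfold hFun
  exact add_nonneg (by positivity) (mul_nonneg (by positivity) hind)

lemma hFun_le_one_sub_mul (hκ : 0 < κ) :
    hFun ε α κ ≤ 1 - α ^ 2 / (κ ^ 2 + α ^ 2) * (1 - probMulLe ε (1 + κ)) := by
  have hind : (if κ ≤ 2 * ε / (1 - ε) then ((1 + ε) / (1 + κ) - (1 - ε)) / (2 * ε) else 0)
      ≤ probMulLe ε (1 + κ) := by
    rw [probMulLe_of_one_lt (by linarith)]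
    split_ifs
    exacts [le_max_right _ _, le_max_left _ _]
  have hS : 0 < κ ^ 2 + α ^ 2 := by positivity
  calc hFun ε α κ ≤ κ ^ 2 / (κ ^ 2 + α ^ 2) + α ^ 2 / (κ ^ 2 + α ^ 2) * probMulLe ε (1 + κ) := by
        unfold hFun; gcongr
    _ = 1 - α ^ 2 / (κ ^ 2 + α ^ 2) * (1 - probMulLe ε (1 + κ)) := by
        field_simp
        ring

end hFun

section lowerBound

variable {Ω : Type*} [MeasurableSpace Ω] {μ : Measure Ω} [IsProbabilityMeasure μ]
  {ε α : ℝ} {Y : Ω → ℝ}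

lemma hFun_le_integral_probMulLe (hε : 0 < ε) (hY : Measurable Y) {κ : ℝ} (hκ : 0 < κ)
    (hp : μ.real {ω | 1 < Y ω} ≤ α ^ 2 / (κ ^ 2 + α ^ 2))
    (hJensen : μ.real {ω | 1 < Y ω} * probMulLe ε (1 + κ)
      ≤ ∫ ω in {ω | 1 < Y ω}, probMulLe ε (Y ω) ∂μ) :
    hFun ε α κ ≤ ∫ ω, probMulLe ε (Y ω) ∂μ := by
  set A := {ω | 1 < Y ω}
  have hA : MeasurableSet A := measurableSet_lt measurable_const hY
  have hAc : ∫ ω in Aᶜ, probMulLe ε (Y ω) ∂μ = 1 - μ.real A := by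
    rw [setIntegral_congr_fun hA.compl fun ω hω => probMulLe_of_le_one (not_lt.1 hω),
      setIntegral_const, smul_eq_mul, mul_one, probReal_compl_eq_one_sub hA]
  calc hFun ε α κ ≤ 1 - α ^ 2 / (κ ^ 2 + α ^ 2) * (1 - probMulLe ε (1 + κ)) :=
        hFun_le_one_sub_mul hκ
    _ ≤ 1 - μ.real A * (1 - probMulLe ε (1 + κ)) := by
        gcongr
        exact sub_nonneg.2 (probMulLe_le_one hε _)
    _ ≤ ∫ ω in A, probMulLe ε (Y ω) ∂μ + ∫ ω in Aᶜ, probMulLe ε (Y ω) ∂μ := by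
        rw [hAc]; linarith
    _ = ∫ ω, probMulLe ε (Y ω) ∂μ :=
        integral_add_compl hA (integrable_probMulLe_comp hε hY.aemeasurable)

lemma exists_hFun_le_integral_probMulLe (hε : 0 < ε) (hY : Measurable Y) (hY2 : MemLp Y 2 μ)
    (hmean : μ[Y] = 1) (hvar : variance Y μ ≤ α ^ 2) :
    ∃ κ > 0, hFun ε α κ ≤ ∫ ω, probMulLe ε (Y ω) ∂μ := by
  set A := {ω | 1 < Y ω}
  have hA : MeasurableSet A := measurableSet_lt measurable_const hY
  by_cases hA0 : μ A = 0
  · refine ⟨1, one_pos, hFun_le_integral_probMulLe hε hY one_pos ?_ ?_⟩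
    · rw [measureReal_def, hA0, ENNReal.toReal_zero]
      positivity
    · rw [Measure.restrict_eq_zero.2 hA0, integral_zero_measure, measureReal_def, hA0,
        ENNReal.toReal_zero, zero_mul]
  have hp : 0 < μ.real A := ENNReal.toReal_pos hA0 (measure_ne_top _ _)
  have hYA : IntegrableOn Y A μ := (hY2.integrable one_le_two).integrableOn
  set κ := ⨍ ω in A, Y ω ∂μ - 1
  have hκ : 0 < κ := by
    have := setIntegral_gt_gt zero_le_one hYA hA0
    rw [sub_pos, setAverage_eq, smul_eq_mul, lt_inv_mul_iff₀ hp]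
    linarith
  refine ⟨κ, hκ, hFun_le_integral_probMulLe hε hY hκ ?_ ?_⟩
  · have h := measureReal_mul_sq_setAverage_sub_le hY2 hA
    rw [hmean] at h
    rw [le_div_iff₀ (by positivity)]
    nlinarith [mul_le_mul_of_nonneg_left hvar (sub_nonneg.2 (measureReal_le_one (μ := μ) (s := A)))]
  · have hJ := (convexOn_probMulLe hε).map_set_average_le (continuousOn_probMulLe hε) isClosed_Ici
      hA0 (measure_ne_top _ _) ((ae_restrict_mem hA).mono fun ω hω => mem_Ici.2 (le_of_lt hω)) hYA
      (integrable_probMulLe_comp hε hY.aemeasurable).integrableOn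
    rw [setAverage_eq (f := fun ω => probMulLe ε (Y ω)), smul_eq_mul, le_inv_mul_iff₀ hp] at hJ
    simpa [κ] using hJ

end lowerBound

theorem prob_ge_inf_hFun {Ω : Type*} [MeasureSpace Ω]
    [IsProbabilityMeasure (ℙ : Measure Ω)]
    (ε α : ℝ) (hε : ε ∈ Set.Ioo (0 : ℝ) 1)
    (Y R : Ω → ℝ) (hYm : Measurable Y) (hRm : Measurable R)
    (hY2 : MemLp Y 2 ℙ)
    (hmean : ∫ ω, Y ω ∂ℙ = 1)
    (hsd : Real.sqrt (variance Y ℙ) ≤ α)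
    (hR : Measure.map R ℙ = uniformIcc (1 - ε) (1 + ε))
    (hindep : IndepFun Y R ℙ) :
    sInf {y : ℝ | ∃ k₂ > 0, y = hFun ε α k₂} ≤ (ℙ {ω | Y ω * R ω ≤ 1 + ε}).toReal := by
  have hvar : variance Y ℙ ≤ α ^ 2 := by
    rw [← Real.sq_sqrt (variance_nonneg Y ℙ)]
    exact pow_le_pow_left₀ (Real.sqrt_nonneg _) hsd 2
  obtain ⟨κ, hκ, hκle⟩ := exists_hFun_le_integral_probMulLe hε.1 hYm hY2 hmean hvar
  have hbdd : BddBelow {y : ℝ | ∃ k₂ > 0, y = hFun ε α k₂} :=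
    ⟨0, by rintro _ ⟨k₂, hk₂, rfl⟩; exact hFun_nonneg hε hk₂.le⟩
  calc sInf {y : ℝ | ∃ k₂ > 0, y = hFun ε α k₂} ≤ hFun ε α κ := csInf_le hbdd ⟨κ, hκ, rfl⟩
    _ ≤ ∫ ω, probMulLe ε (Y ω) := hκle
    _ ≤ (ℙ {ω | Y ω * R ω ≤ 1 + ε}).toReal :=
        integral_probMulLe_le_measure_mul_le hε.1 hε.2.le hYm hRm hR hindep
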